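/- arXiv:2103.05352 — 6 statements merged into one kernel-verified Lean document; each statement's English description precedes it below -/
import Mathlib

section
/- Let A be a faithful algebra over ℂ and (L, R) a double centralizer on A. Then L and R are linear maps (additive and ℂ-homogeneous). -/
/-- If `A` is a faithful algebra over `ℂ` and `(L, R)` is a double centralizer on `A`
(no linearity assumed), then `L` and `R` are linear. -/
theorem stmt3 {A : Type*} [Ring A] [Algebra ℂ A]
    (hfaith₁ : ∀ x : A, (∀ y, x * y = 0) → x = 0)
    (hfaith₂ : ∀ x : A, (∀ y, y * x = 0) → x = 0)
    (L R : A → A) (h : ∀ x y : A, x * L y = R x * y) :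
    (∀ x y : A, L (x + y) = L x + L y) ∧ (∀ (c : ℂ) (x : A), L (c • x) = c • L x) ∧
    (∀ x y : A, R (x + y) = R x + R y) ∧ (∀ (c : ℂ) (x : A), R (c • x) = c • R x) := by
  refine ⟨fun x y => sub_eq_zero.mp (hfaith₂ _ fun z => ?_),
    fun c x => sub_eq_zero.mp (hfaith₂ _ fun z => ?_),
    fun x y => sub_eq_zero.mp (hfaith₁ _ fun z => ?_),
    fun c x => sub_eq_zero.mp (hfaith₁ _ fun z => ?_)⟩
  · rw [mul_sub, mul_add, h, h, h, mul_add, sub_self]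
  · rw [mul_sub, h, mul_smul_comm, mul_smul_comm, h, sub_self]
  · rw [sub_mul, add_mul, ← h, ← h, ← h, add_mul, sub_self]
  · rw [sub_mul, ← h, smul_mul_assoc, smul_mul_assoc, ← h, sub_self]
end

section
/- Let A be a faithful algebra and (L, R) a double centralizer on A. Then L(xy) = L(x)·y and R(xy) = x·R(y) for all x, y ∈ A; i.e., L is a right-module homomorphism and R is a left-module homomorphism. -/
/-- If `A` is a faithful algebra and `(L, R)` is a double centralizer on `A`, then
`L(xy) = L(x)·y` and `R(xy) = x·R(y)`, i.e. `L` is a right-module homomorphism and `R`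
is a left-module homomorphism. -/
theorem stmt4 {A : Type*} [Ring A] [Algebra ℂ A]
    (hfaith₁ : ∀ x : A, (∀ y, x * y = 0) → x = 0)
    (hfaith₂ : ∀ x : A, (∀ y, y * x = 0) → x = 0)
    (L R : A → A) (h : ∀ x y : A, x * L y = R x * y) :
    (∀ x y : A, L (x * y) = L x * y) ∧ (∀ x y : A, R (x * y) = x * R y) := by
  constructor
  · intro x y
    have := hfaith₂ (L (x * y) - L x * y) (fun z => by
      have h1 : z * L (x * y) = z * (L x * y) := by
        rw [h, ← mul_assoc, ← h, mul_assoc]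
      rw [mul_sub, h1, sub_self])
    exact sub_eq_zero.mp this
  · intro x y
    have := hfaith₁ (R (x * y) - x * R y) (fun z => by
      have h1 : R (x * y) * z = (x * R y) * z := by
        rw [← h, mul_assoc, h, ← mul_assoc]
      rw [sub_mul, h1, sub_self])
    exact sub_eq_zero.mp this
end

section
/- Any linear map x: s → s such that s ⊂ D(x*) and x*(s) ⊂ s (where x* is the Hilbert-space adjoint of x viewed as an unbounded operator on ℓ₂ with domain s) is automatically continuous as a map from the Fréchet space s to itself. -/
/-- The `n`-th norm `|ξ|_n = (Σ_j |ξ_j|² j^{2n})^{1/2}` of the space `s` of rapidly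
decreasing sequences (indices shifted: `j : ℕ` stands for the positive integer `j+1`). -/
noncomputable def pnorm (n : ℕ) (ξ : ℕ → ℂ) : ℝ :=
  Real.sqrt (∑' j : ℕ, ‖ξ j‖ ^ 2 * ((j : ℝ) + 1) ^ (2 * n))

/-- The dual norm `|ξ|_{-n} = (Σ_j |ξ_j|² j^{-2n})^{1/2}`. -/
noncomputable def mnorm (n : ℕ) (ξ : ℕ → ℂ) : ℝ :=
  Real.sqrt (∑' j : ℕ, ‖ξ j‖ ^ 2 / ((j : ℝ) + 1) ^ (2 * n))

/-- Membership in the space `s` of rapidly decreasing sequences. -/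
def InS (ξ : ℕ → ℂ) : Prop :=
  ∀ n : ℕ, Summable fun j : ℕ => ‖ξ j‖ ^ 2 * ((j : ℝ) + 1) ^ (2 * n)

/-- Membership in the space `s'` of slowly increasing sequences. -/
def InS' (ξ : ℕ → ℂ) : Prop :=
  ∃ n : ℕ, Summable fun j : ℕ => ‖ξ j‖ ^ 2 / ((j : ℝ) + 1) ^ (2 * n)

/-- The pairing `⟨ξ, η⟩ = Σ_j ξ_j conj(η_j)` extending the `ℓ₂` inner product. -/
noncomputable def pairing (ξ η : ℕ → ℂ) : ℂ := ∑' j : ℕ, ξ j * (starRingEnd ℂ) (η j)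


/-!
Realise `s` as a closed subspace of the countable product `ℕ → ℓ²` of Hilbert spaces, sending `ξ`
to the tower `(j^n ξ_j)_n`. It is then completely metrizable, hence a Baire space, hence barrelled.
For fixed `q`, the seminorm `ξ ↦ |x ξ|_q` is lower semicontinuous: the coordinates
`(x ξ)_j = ⟨ξ, y e_j⟩` are continuous, and the `ℓ²` norm is lower semicontinuous under
coordinatewise convergence (Fatou). On a barrelled space such a seminorm is continuous, so it is
dominated by finitely many of the norms `|·|_n`, and they increase with `n`.
-/

open Filter Topology
open scoped lp ENNReal InnerProductSpace

theorem lp.lowerSemicontinuous_norm_comp {α T : Type*} {E : α → Type*}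
    [∀ i, NormedAddCommGroup (E i)] {p : ℝ≥0∞} [Fact (1 ≤ p)] [TopologicalSpace T]
    {f : T → lp E p} (hf : Continuous fun t ↦ (f t : ∀ i, E i)) :
    LowerSemicontinuous fun t ↦ ‖f t‖ := by
  intro t y hy
  by_contra h
  have : (𝓝 t ⊓ 𝓟 {t' | ¬ y < ‖f t'‖}).NeBot := frequently_iff_neBot.mp (not_eventually.mp h)
  refine (lp.norm_le_of_tendsto (F := f) (l := 𝓝 t ⊓ 𝓟 {t' | ¬ y < ‖f t'‖}) ?_ ?_).not_gt hy
  · exact eventually_inf_principal.2 (Eventually.of_forall fun _ h ↦ not_lt.mp h)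
  · exact hf.continuousAt.tendsto.mono_left inf_le_left

/-- `weighted n ξ` is `(j^n ξ_j)_j`, with the index shift of `pnorm`. -/
def weighted (n : ℕ) (ξ : ℕ → ℂ) : ℕ → ℂ := fun j ↦ ((j : ℂ) + 1) ^ n * ξ j

@[simp]
lemma weighted_zero (ξ : ℕ → ℂ) : weighted 0 ξ = ξ := by
  funext j
  simp [weighted]

lemma weighted_add (n : ℕ) (ξ η : ℕ → ℂ) : weighted n (ξ + η) = weighted n ξ + weighted n η := by
  funext j
  simp [weighted, mul_add]

lemma weighted_smul (n : ℕ) (c : ℂ) (ξ : ℕ → ℂ) : weighted n (c • ξ) = c • weighted n ξ := by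
  funext j
  simp [weighted, mul_left_comm]

lemma norm_weighted_sq (n : ℕ) (ξ : ℕ → ℂ) (j : ℕ) :
    ‖weighted n ξ j‖ ^ 2 = ‖ξ j‖ ^ 2 * ((j : ℝ) + 1) ^ (2 * n) := by
  have : ‖(j : ℂ) + 1‖ = (j : ℝ) + 1 := by norm_cast
  rw [weighted, norm_mul, norm_pow, this, mul_pow, ← pow_mul]
  ring

lemma memℓp_weighted_iff {n : ℕ} {ξ : ℕ → ℂ} :
    Memℓp (weighted n ξ) 2 ↔ Summable fun j ↦ ‖ξ j‖ ^ 2 * ((j : ℝ) + 1) ^ (2 * n) := by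
  simp [memℓp_gen_iff, norm_weighted_sq]

lemma inS_iff_forall_memℓp {ξ : ℕ → ℂ} : InS ξ ↔ ∀ n, Memℓp (weighted n ξ) 2 := by
  simp only [memℓp_weighted_iff, InS]

lemma InS.memℓp {ξ : ℕ → ℂ} (hξ : InS ξ) : Memℓp ξ 2 := by
  simpa using inS_iff_forall_memℓp.1 hξ 0

lemma pnorm_eq_norm {n : ℕ} {ξ : ℕ → ℂ} (w : ℓ²(ℕ, ℂ)) (hw : ⇑w = weighted n ξ) :
    pnorm n ξ = ‖w‖ := by
  rw [lp.norm_eq_tsum_rpow (by norm_num), pnorm, hw, Real.sqrt_eq_rpow]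
  simp [norm_weighted_sq]

lemma pairing_eq_inner (f g : ℓ²(ℕ, ℂ)) : pairing ⇑f ⇑g = ⟪g, f⟫_ℂ := by
  rw [lp.inner_eq_tsum, pairing]
  exact tsum_congr fun j ↦ by simp

lemma pairing_single (ξ : ℕ → ℂ) (j : ℕ) : pairing ξ (Pi.single j 1) = ξ j := by
  rw [pairing, tsum_eq_single j fun i hi ↦ by simp [hi]]
  simp

lemma inS_single (j : ℕ) : InS (Pi.single j 1) := fun _ ↦
  summable_of_ne_finset_zero (s := {j}) fun i hi ↦ by simp_all

/-- The space `s`, realised as the subspace of `ℕ → ℓ²` of towers `(weighted n ξ)_n`: inside this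
product of Hilbert spaces it is closed and carries the topology of the norms `pnorm n`. -/
def rapidlyDecreasing : Submodule ℂ (ℕ → ℓ²(ℕ, ℂ)) where
  carrier := {v | ∀ n, ⇑(v n) = weighted n ⇑(v 0)}
  add_mem' {v w} hv hw n := by
    simp only [Pi.add_apply, lp.coeFn_add, weighted_add, hv n, hw n]
  zero_mem' n := by
    funext j
    simp [weighted]
  smul_mem' c v hv n := by
    simp only [Pi.smul_apply, lp.coeFn_smul, weighted_smul, hv n]

lemma isClosed_rapidlyDecreasing : IsClosed (rapidlyDecreasing : Set (ℕ → ℓ²(ℕ, ℂ))) := by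
  have hcoord (n j : ℕ) : Continuous fun v : ℕ → ℓ²(ℕ, ℂ) ↦ v n j :=
    (lp.evalCLM ℂ (fun _ : ℕ ↦ ℂ) 2 j).continuous.comp (continuous_apply n)
  have : (rapidlyDecreasing : Set (ℕ → ℓ²(ℕ, ℂ))) =
      ⋂ n, ⋂ j : ℕ, {v | v n j = ((j : ℂ) + 1) ^ n * v 0 j} := by
    ext v
    simp [rapidlyDecreasing, funext_iff, weighted]
  rw [this]
  exact isClosed_iInter fun n ↦ isClosed_iInter fun j ↦
    isClosed_eq (hcoord n j) (continuous_const.mul (hcoord 0 j))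

instance : BaireSpace rapidlyDecreasing :=
  have := isClosed_rapidlyDecreasing.isCompletelyPseudoMetrizableSpace
  inferInstance

namespace rapidlyDecreasing

lemma inS (v : rapidlyDecreasing) : InS ⇑(v.1 0) :=
  inS_iff_forall_memℓp.2 fun n ↦ v.2 n ▸ (v.1 n).2

lemma pnorm_eq (v : rapidlyDecreasing) (n : ℕ) : pnorm n ⇑(v.1 0) = ‖v.1 n‖ :=
  pnorm_eq_norm _ (v.2 n)

def ofInS (ξ : ℕ → ℂ) (hξ : InS ξ) : rapidlyDecreasing :=
  ⟨fun n ↦ ⟨weighted n ξ, inS_iff_forall_memℓp.1 hξ n⟩, fun n ↦ by simp⟩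

@[simp]
lemma coe_ofInS_zero (ξ : ℕ → ℂ) (hξ : InS ξ) : ⇑((ofInS ξ hξ).1 0) = ξ :=
  weighted_zero ξ

lemma norm_mono (v : rapidlyDecreasing) {n m : ℕ} (hnm : n ≤ m) : ‖v.1 n‖ ≤ ‖v.1 m‖ := by
  rw [← pnorm_eq, ← pnorm_eq]
  refine Real.sqrt_le_sqrt (Summable.tsum_le_tsum (fun j ↦ ?_) (inS v n) (inS v m))
  exact mul_le_mul_of_nonneg_left
    (pow_le_pow_right₀ (le_add_of_nonneg_left (Nat.cast_nonneg j)) (by omega)) (sq_nonneg _)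

lemma exists_bound_of_continuous (P : Seminorm ℂ rapidlyDecreasing) (hP : Continuous P) :
    ∃ r, ∃ C : ℝ, 0 < C ∧ ∀ v, P v ≤ C * ‖v.1 r‖ := by
  obtain ⟨s, C, hC, hle⟩ := Seminorm.bound_of_continuous
    (rapidlyDecreasing.subtype.withSeminorms_induced (withSeminorms_pi fun _ ↦
      norm_withSeminorms ℂ ℓ²(ℕ, ℂ))) P hP
  refine ⟨s.sup Sigma.fst, C, NNReal.coe_pos.2 (pos_iff_ne_zero.2 hC), fun v ↦ (hle v).trans ?_⟩
  refine mul_le_mul_of_nonneg_left (Seminorm.finset_sup_apply_le (norm_nonneg _) ?_) C.2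
  exact fun i hi ↦ norm_mono v (Finset.le_sup (f := Sigma.fst) hi)

end rapidlyDecreasing

section adjoint

open rapidlyDecreasing

variable {x y : (ℕ → ℂ) → (ℕ → ℂ)}

lemma apply_eq_inner (hyS : ∀ η, InS η → InS (y η))
    (hadj : ∀ ξ η, InS ξ → InS η → pairing (x ξ) η = pairing ξ (y η))
    (ζ : ℓ²(ℕ, ℂ)) (hζ : InS ζ) (j : ℕ) :
    x ζ j = ⟪(⟨y (Pi.single j 1), (hyS _ (inS_single j)).memℓp⟩ : ℓ²(ℕ, ℂ)), ζ⟫_ℂ := by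
  rw [← pairing_single (x ζ), hadj _ _ hζ (inS_single j), ← pairing_eq_inner]

/-- The `q`-th component of the operator that `x` induces on `rapidlyDecreasing`. -/
def weightedImage (q : ℕ) (hxS : ∀ ξ, InS ξ → InS (x ξ))
    (hadd : ∀ ξ η, InS ξ → InS η → x (ξ + η) = x ξ + x η)
    (hsmul : ∀ (c : ℂ) ξ, InS ξ → x (c • ξ) = c • x ξ) :
    rapidlyDecreasing →ₗ[ℂ] ℓ²(ℕ, ℂ) where
  toFun v := ⟨weighted q (x ⇑(v.1 0)), inS_iff_forall_memℓp.1 (hxS _ (inS v)) q⟩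
  map_add' v w := lp.ext <| by
    simp only [Submodule.coe_add, Pi.add_apply, lp.coeFn_add, hadd _ _ (inS v) (inS w),
      weighted_add]
  map_smul' c v := lp.ext <| by
    simp only [Submodule.coe_smul, Pi.smul_apply, lp.coeFn_smul, hsmul _ _ (inS v),
      weighted_smul, RingHom.id_apply]

variable (q : ℕ) (hxS : ∀ ξ, InS ξ → InS (x ξ))
    (hadd : ∀ ξ η, InS ξ → InS η → x (ξ + η) = x ξ + x η)
    (hsmul : ∀ (c : ℂ) ξ, InS ξ → x (c • ξ) = c • x ξ)

lemma norm_weightedImage (v : rapidlyDecreasing) :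
    ‖weightedImage q hxS hadd hsmul v‖ = pnorm q (x ⇑(v.1 0)) :=
  (pnorm_eq_norm _ rfl).symm

lemma lowerSemicontinuous_norm_weightedImage (hyS : ∀ η, InS η → InS (y η))
    (hadj : ∀ ξ η, InS ξ → InS η → pairing (x ξ) η = pairing ξ (y η)) :
    LowerSemicontinuous fun v ↦ ‖weightedImage q hxS hadd hsmul v‖ := by
  refine lp.lowerSemicontinuous_norm_comp (continuous_pi fun j ↦ ?_)
  set w : ℓ²(ℕ, ℂ) := ⟨y (Pi.single j 1), (hyS _ (inS_single j)).memℓp⟩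
  have hcoord (v : rapidlyDecreasing) :
      (weightedImage q hxS hadd hsmul v : ℕ → ℂ) j = ((j : ℂ) + 1) ^ q * ⟪w, v.1 0⟫_ℂ :=
    congrArg (_ * ·) (apply_eq_inner hyS hadj _ (inS v) j)
  simp only [hcoord]
  exact continuous_const.mul
    (continuous_const.inner ((continuous_apply 0).comp continuous_subtype_val))

end adjoint

/-- Automatic continuity: any linear map `x : s → s` whose `ℓ₂`-adjoint is defined on
`s` and maps `s` into `s` (witnessed by `y` below) is continuous on the Fréchet space
`s`. -/
theorem stmt8 (x y : (ℕ → ℂ) → (ℕ → ℂ))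
    (hxS : ∀ ξ, InS ξ → InS (x ξ))
    (hadd : ∀ ξ η, InS ξ → InS η → x (ξ + η) = x ξ + x η)
    (hsmul : ∀ (c : ℂ) ξ, InS ξ → x (c • ξ) = c • x ξ)
    (hyS : ∀ η, InS η → InS (y η))
    (hadj : ∀ ξ η, InS ξ → InS η → pairing (x ξ) η = pairing ξ (y η)) :
    ∀ q : ℕ, ∃ r : ℕ, ∃ C : ℝ, 0 < C ∧ ∀ ξ, InS ξ → pnorm q (x ξ) ≤ C * pnorm r ξ := by
  intro q
  let P := (normSeminorm ℂ ℓ²(ℕ, ℂ)).comp (weightedImage q hxS hadd hsmul)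
  have hP : Continuous P := P.continuous_of_lowerSemicontinuous
    (lowerSemicontinuous_norm_weightedImage q hxS hadd hsmul hyS hadj)
  obtain ⟨r, C, hC, hbound⟩ := rapidlyDecreasing.exists_bound_of_continuous P hP
  refine ⟨r, C, hC, fun ξ hξ ↦ ?_⟩
  have := hbound (rapidlyDecreasing.ofInS ξ hξ)
  rwa [Seminorm.comp_apply, coe_normSeminorm, norm_weightedImage, ← rapidlyDecreasing.pnorm_eq,
    rapidlyDecreasing.coe_ofInS_zero] at this
end

section
/- For every N ∈ ℕ there exists M ∈ ℕ (namely M = N+1) such that for every K ∈ ℕ there is θ₀ ∈ (0,1) with: for all θ ∈ [θ₀, 1), n = 1, and every m ∈ ℕ, there exist k ∈ ℕ and C > 0 such that (j^K/i^k)^{1-θ}(j^N/i^n)^θ ≤ C · j^M/i^m for all i, j ∈ ℕ. (Sufficient choices: θ₀ with (1-θ₀)K + Nθ₀ ≤ M, and k with (1-θ)k + nθ ≥ m, C = 1.) -/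
/-!
Both weights are monomials `j^a / i^b`, so their geometric interpolation is the monomial with the
interpolated exponents `(1-θ)K + θN` and `(1-θ)k + θ`. For `i, j ≥ 1` such a monomial grows with the
`j`-exponent and shrinks with the `i`-exponent, so `C = 1` works as soon as `(1-θ)K + θN ≤ N + 1`,
which holds once `1 - θ ≤ 1/(K+2)`, and `m ≤ (1-θ)k + θ`, which `k = ⌈m/(1-θ)⌉` ensures.
-/

open Real

lemma rpow_div_rpow_interpolate {x y : ℝ} (hx : 0 < x) (hy : 0 < y) (a b c d θ : ℝ) :
    (y ^ a / x ^ b) ^ (1 - θ) * (y ^ c / x ^ d) ^ θ =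
      y ^ ((1 - θ) * a + θ * c) / x ^ ((1 - θ) * b + θ * d) := by
  rw [div_rpow (by positivity) (by positivity), div_rpow (by positivity) (by positivity),
    ← rpow_mul hy.le, ← rpow_mul hx.le, ← rpow_mul hy.le, ← rpow_mul hx.le, div_mul_div_comm,
    ← rpow_add hy, ← rpow_add hx]
  ring_nf

lemma rpow_div_rpow_le_rpow_div_rpow {x y p P q Q : ℝ} (hx : 1 ≤ x) (hy : 1 ≤ y)
    (hp : p ≤ P) (hq : Q ≤ q) : y ^ p / x ^ q ≤ y ^ P / x ^ Q :=
  div_le_div₀ (by positivity) (rpow_le_rpow_of_exponent_le hy hp) (by positivity)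
    (rpow_le_rpow_of_exponent_le hx hq)

lemma one_sub_mul_add_mul_le_add_one {K N θ : ℝ} (hK : 0 ≤ K) (hN : 0 ≤ N)
    (hθ : 1 - 1 / (K + 2) ≤ θ) (hθ1 : θ ≤ 1) : (1 - θ) * K + N * θ ≤ N + 1 := by
  have h : (1 - θ) * (K + 2) ≤ 1 := by
    rw [← le_div_iff₀ (by positivity)]
    linarith
  nlinarith

/-- The key interpolation inequality (dual interpolation estimate for big `θ`) for the
Köthe weights `b'_{ij,N,n} = j^N/i^n` with `n = 1`: for every `N` there is `M = N+1`
such that for every `K` there is `θ₀ ∈ (0,1)` with `(1-θ₀)K + Nθ₀ ≤ M`, and for all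
`θ ∈ [θ₀,1)` and `m` there are `k` with `(1-θ)k + θ ≥ m` and `C > 0` with
`(j^K/i^k)^{1-θ}(j^N/i)^θ ≤ C·j^M/i^m` for all `i, j ≥ 1`. -/
theorem stmt10 : ∀ N : ℕ, ∃ M : ℕ, M = N + 1 ∧
    ∀ K : ℕ, ∃ θ₀ : ℝ, 0 < θ₀ ∧ θ₀ < 1 ∧ (1 - θ₀) * K + N * θ₀ ≤ M ∧
      ∀ θ : ℝ, θ₀ ≤ θ → θ < 1 → ∀ m : ℕ, ∃ k : ℕ, ∃ C : ℝ, 0 < C ∧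
        (m : ℝ) ≤ (1 - θ) * k + θ * 1 ∧
        ∀ i j : ℕ, 1 ≤ i → 1 ≤ j →
          ((j : ℝ) ^ K / (i : ℝ) ^ k) ^ (1 - θ) * ((j : ℝ) ^ N / (i : ℝ) ^ 1) ^ θ ≤
            C * (j : ℝ) ^ M / (i : ℝ) ^ m := by
  intro N
  refine ⟨N + 1, rfl, fun K => ?_⟩
  have hδ : 1 / ((K : ℝ) + 2) ≤ 1 / 2 :=
    one_div_le_one_div_of_le two_pos (by linarith [K.cast_nonneg (α := ℝ)])
  have hδ_pos : 0 < 1 / ((K : ℝ) + 2) := by positivity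
  have hexp {θ : ℝ} (hθ : 1 - 1 / ((K : ℝ) + 2) ≤ θ) (hθ1 : θ ≤ 1) :
      (1 - θ) * K + N * θ ≤ N + 1 :=
    one_sub_mul_add_mul_le_add_one K.cast_nonneg N.cast_nonneg hθ hθ1
  refine ⟨1 - 1 / ((K : ℝ) + 2), by linarith, by linarith,
    by exact_mod_cast hexp le_rfl (by linarith), fun θ hθ hθ1 m => ?_⟩
  have hθ_pos : 0 < 1 - θ := by linarith
  set k := ⌈(m : ℝ) / (1 - θ)⌉₊
  have hk : (m : ℝ) ≤ (1 - θ) * k + θ * 1 := by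
    have := (div_le_iff₀' hθ_pos).1 (Nat.le_ceil ((m : ℝ) / (1 - θ)))
    linarith
  refine ⟨k, 1, one_pos, hk, fun i j hi hj => ?_⟩
  have hx : (1 : ℝ) ≤ i := by exact_mod_cast hi
  have hy : (1 : ℝ) ≤ j := by exact_mod_cast hj
  simp only [← rpow_natCast]
  rw [rpow_div_rpow_interpolate (by linarith) (by linarith), one_mul]
  push_cast
  exact rpow_div_rpow_le_rpow_div_rpow hx hy (by linarith [hexp hθ hθ1.le]) hk
end

section
/- For the Köthe matrix a_{ij,N,n} = max(i^N/j^n, j^N/i^n): for every N, set M := N+1; for every K choose θ₀ ∈ (0,1) with (1-θ₀)K + Nθ₀ ≤ M; then for n = 1, any m, and any θ ∈ [θ₀, 1), choosing k with (1-θ)k + θ ≥ m yields (a_{ij,K,k})^{1-θ}(a_{ij,N,1})^θ ≤ a_{ij,M,m} for all positive integers i, j. -/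
/-- The Köthe weight `a_{ij,N,n} = max(i^N/j^n, j^N/i^n)` for positive integers `i, j`. -/
noncomputable def kw (i j N n : ℕ) : ℝ :=
  max ((i : ℝ) ^ N / (j : ℝ) ^ n) ((j : ℝ) ^ N / (i : ℝ) ^ n)

lemma kw_symm (i j N n : ℕ) : kw i j N n = kw j i N n := by
  simp [kw, max_comm]

lemma kw_eq_of_le (i j N n : ℕ) (hj : 1 ≤ j) (hji : j ≤ i) :
    kw i j N n = (i : ℝ) ^ N / (j : ℝ) ^ n := by
  have hj' : (1 : ℝ) ≤ (j : ℝ) := by exact_mod_cast hj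
  have hji' : (j : ℝ) ≤ (i : ℝ) := by exact_mod_cast hji
  have hjpos : (0 : ℝ) < (j : ℝ) := lt_of_lt_of_le one_pos hj'
  have hipos : (0 : ℝ) < (i : ℝ) := lt_of_lt_of_le hjpos hji'
  apply max_eq_left
  rw [div_le_div_iff₀ (pow_pos hipos n) (pow_pos hjpos n)]
  calc (j : ℝ) ^ N * (j : ℝ) ^ n ≤ (i : ℝ) ^ N * (i : ℝ) ^ n := by
        exact mul_le_mul (pow_le_pow_left₀ hjpos.le hji' N)
          (pow_le_pow_left₀ hjpos.le hji' n) (pow_nonneg hjpos.le n)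
          (pow_nonneg hipos.le N)
    _ = (i : ℝ) ^ N * (i : ℝ) ^ n := rfl

lemma aux (K N m k : ℕ) (θ : ℝ) (hθ0 : 0 ≤ θ) (hθ1 : θ < 1)
    (hK : (1 - θ) * K + N * θ ≤ (N : ℝ) + 1)
    (hk : (m : ℝ) ≤ (1 - θ) * k + θ)
    (x y : ℝ) (hy : 1 ≤ y) (hxy : y ≤ x) :
    (x ^ K / y ^ k) ^ (1 - θ) * (x ^ N / y ^ 1) ^ θ ≤ x ^ (N + 1) / y ^ m := by
  have hx : (1 : ℝ) ≤ x := le_trans hy hxy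
  have hx0 : (0 : ℝ) < x := lt_of_lt_of_le one_pos hx
  have hy0 : (0 : ℝ) < y := lt_of_lt_of_le one_pos hy
  have h1θ : (0 : ℝ) ≤ 1 - θ := by linarith
  -- rewrite natural powers as rpow
  have e1 : (x ^ K / y ^ k) ^ (1 - θ)
      = x ^ ((K : ℝ) * (1 - θ)) / y ^ ((k : ℝ) * (1 - θ)) := by
    rw [Real.div_rpow (pow_nonneg hx0.le _) (pow_nonneg hy0.le _),
      ← Real.rpow_natCast x K, ← Real.rpow_natCast y k,
      ← Real.rpow_mul hx0.le, ← Real.rpow_mul hy0.le]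
  have e2 : (x ^ N / y ^ 1) ^ θ = x ^ ((N : ℝ) * θ) / y ^ θ := by
    rw [Real.div_rpow (pow_nonneg hx0.le _) (pow_nonneg hy0.le _),
      ← Real.rpow_natCast x N, ← Real.rpow_mul hx0.le, pow_one]
  rw [e1, e2, div_mul_div_comm, ← Real.rpow_add hx0, ← Real.rpow_add hy0]
  have hxe : x ^ ((K : ℝ) * (1 - θ) + (N : ℝ) * θ) ≤ x ^ ((N : ℝ) + 1) := by
    apply Real.rpow_le_rpow_of_exponent_le hx
    linarith [hK]
  have hye : y ^ (m : ℝ) ≤ y ^ ((k : ℝ) * (1 - θ) + θ) := by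
    apply Real.rpow_le_rpow_of_exponent_le hy
    linarith [hk]
  have hxN : x ^ ((N : ℝ) + 1) = x ^ (N + 1) := by
    rw [← Real.rpow_natCast x (N + 1)]; push_cast; ring_nf
  have hym : y ^ (m : ℝ) = y ^ m := Real.rpow_natCast y m
  calc x ^ ((K : ℝ) * (1 - θ) + (N : ℝ) * θ) / y ^ ((k : ℝ) * (1 - θ) + θ)
      ≤ x ^ ((N : ℝ) + 1) / y ^ (m : ℝ) := by
        apply div_le_div₀ (Real.rpow_nonneg hx0.le _) hxe
          (Real.rpow_pos_of_pos hy0 _) hye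
    _ = x ^ (N + 1) / y ^ m := by rw [hxN, hym]

/-- Dual interpolation estimate for big `θ` for the weights of `Λ(A)`: for every `N`,
with `M := N+1`, and every `K` there is `θ₀ ∈ (0,1)` with `(1-θ₀)K + Nθ₀ ≤ M` such
that for `n = 1`, every `m` and every `θ ∈ [θ₀,1)` there is `k` with `(1-θ)k + θ ≥ m`
and `(a_{ij,K,k})^{1-θ}(a_{ij,N,1})^θ ≤ a_{ij,M,m}` for all `i, j ≥ 1`. -/
theorem stmt11 : ∀ N K : ℕ, ∃ θ₀ : ℝ, 0 < θ₀ ∧ θ₀ < 1 ∧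
    (1 - θ₀) * K + N * θ₀ ≤ ((N : ℝ) + 1) ∧
    ∀ θ : ℝ, θ₀ ≤ θ → θ < 1 → ∀ m : ℕ, ∃ k : ℕ,
      (m : ℝ) ≤ (1 - θ) * k + θ * 1 ∧
      ∀ i j : ℕ, 1 ≤ i → 1 ≤ j →
        (kw i j K k) ^ (1 - θ) * (kw i j N 1) ^ θ ≤ kw i j (N + 1) m := by
  intro N K
  refine ⟨((K : ℝ) + 1) / ((K : ℝ) + 2), ?_, ?_, ?_, ?_⟩
  · positivity
  · rw [div_lt_one (by positivity)]; linarith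
  · have hK0 : (0 : ℝ) ≤ (K : ℝ) := Nat.cast_nonneg K
    have hN0 : (0 : ℝ) ≤ (N : ℝ) := Nat.cast_nonneg N
    have h2 : (0 : ℝ) < (K : ℝ) + 2 := by linarith
    have h1 : 1 - ((K : ℝ) + 1) / ((K : ℝ) + 2) = 1 / ((K : ℝ) + 2) := by
      field_simp; norm_num
    rw [h1]
    have : 1 / ((K : ℝ) + 2) * K ≤ 1 := by
      rw [div_mul_eq_mul_div, div_le_one h2]; linarith
    have h3 : (N : ℝ) * (((K : ℝ) + 1) / ((K : ℝ) + 2)) ≤ N := by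
      apply mul_le_of_le_one_right hN0
      rw [div_le_one h2]; linarith
    linarith
  · intro θ hθ₀ hθ1 m
    have hK0 : (0 : ℝ) ≤ (K : ℝ) := Nat.cast_nonneg K
    have h2 : (0 : ℝ) < (K : ℝ) + 2 := by linarith
    have hθ0 : 0 < θ := lt_of_lt_of_le (by positivity) hθ₀
    have h1θ : (0 : ℝ) < 1 - θ := by linarith
    refine ⟨⌈(m : ℝ) / (1 - θ)⌉₊, ?_, ?_⟩
    · have hceil : (m : ℝ) / (1 - θ) ≤ (⌈(m : ℝ) / (1 - θ)⌉₊ : ℝ) :=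
        Nat.le_ceil _
      have : (m : ℝ) ≤ (1 - θ) * (⌈(m : ℝ) / (1 - θ)⌉₊ : ℝ) := by
        rw [← div_le_iff₀' h1θ]; exact hceil
      linarith
    · intro i j hi hj
      have hK' : (1 - θ) * K + N * θ ≤ (N : ℝ) + 1 := by
        have hN0 : (0 : ℝ) ≤ (N : ℝ) := Nat.cast_nonneg N
        have hA : 1 - θ ≤ 1 - ((K : ℝ) + 1) / ((K : ℝ) + 2) := by linarith
        have hB : 1 - ((K : ℝ) + 1) / ((K : ℝ) + 2) = 1 / ((K : ℝ) + 2) := by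
          field_simp; norm_num
        have hC : (1 - θ) * K ≤ 1 / ((K : ℝ) + 2) * K := by
          apply mul_le_mul_of_nonneg_right _ hK0
          rw [hB] at hA; exact hA
        have hD : 1 / ((K : ℝ) + 2) * K ≤ 1 := by
          rw [div_mul_eq_mul_div, div_le_one h2]; linarith
        have hE : (N : ℝ) * θ ≤ N := by
          apply mul_le_of_le_one_right hN0 hθ1.le
        linarith
      have hkk : (m : ℝ) ≤ (1 - θ) * (⌈(m : ℝ) / (1 - θ)⌉₊ : ℝ) + θ := by
        have hceil : (m : ℝ) / (1 - θ) ≤ (⌈(m : ℝ) / (1 - θ)⌉₊ : ℝ) :=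
          Nat.le_ceil _
        have : (m : ℝ) ≤ (1 - θ) * (⌈(m : ℝ) / (1 - θ)⌉₊ : ℝ) := by
          rw [← div_le_iff₀' h1θ]; exact hceil
        linarith
      rcases le_total j i with hji | hij
      · rw [kw_eq_of_le i j K _ hj hji, kw_eq_of_le i j N 1 hj hji,
          kw_eq_of_le i j (N + 1) m hj hji]
        exact aux K N m _ θ hθ0.le hθ1 hK' hkk _ _
          (by exact_mod_cast hj) (by exact_mod_cast hji)
      · rw [kw_symm i j K _, kw_symm i j N 1, kw_symm i j (N + 1) m,
          kw_eq_of_le j i K _ hi hij, kw_eq_of_le j i N 1 hi hij,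
          kw_eq_of_le j i (N + 1) m hi hij]
        exact aux K N m _ θ hθ0.le hθ1 hK' hkk _ _
          (by exact_mod_cast hi) (by exact_mod_cast hij)
end

section
/- For every ξ ∈ s with ‖ξ‖_{ℓ₂} ≠ 0, the rank-one operator x_ξ := ‖ξ‖_{ℓ₂}^{-1} ⟨·, ξ⟩ξ satisfies ‖x_ξ‖_m := sup{|x_ξ ζ|_m : |ζ|_{-m} ≤ 1} = ‖ξ‖_{ℓ₂}^{-1}|ξ|_m² ≤ |ξ|_{2m} for every m ∈ ℕ. Consequently, if B is a bounded subset of s then {x_ξ : ξ ∈ B, ξ ≠ 0} is a bounded subset of L(s', s). -/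
/-- The normalized rank-one operator `x_ξ = ‖ξ‖₂⁻¹ ⟨·,ξ⟩ξ : s' → s`. -/
noncomputable def rankOne (ξ : ℕ → ℂ) : (ℕ → ℂ) → (ℕ → ℂ) :=
  fun ζ j => ((pnorm 0 ξ : ℝ)⁻¹ : ℂ) * pairing ζ ξ * ξ j

/-!
Since `x_ξ ζ` is the multiple `‖ξ‖₂⁻¹⟨ζ, ξ⟩` of `ξ`, `|x_ξ ζ|_m = ‖ξ‖₂⁻¹ |⟨ζ, ξ⟩| |ξ|_m`.
Writing `ζ_j ξ̄_j = (ζ_j (j+1)^{-m}) (ξ̄_j (j+1)^m)`, Cauchy–Schwarz gives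
`|⟨ζ, ξ⟩| ≤ |ζ|_{-m} |ξ|_m`, with equality for `ζ_j = ξ_j (j+1)^{2m} / |ξ|_m`; hence
`‖x_ξ‖_m = ‖ξ‖₂⁻¹ |ξ|_m²`. Splitting `|ξ_j|² (j+1)^{2m} = |ξ_j| · |ξ_j| (j+1)^{2m}` instead,
Cauchy–Schwarz gives `|ξ|_m² ≤ ‖ξ‖₂ |ξ|_{2m}`, which is bounded uniformly on a bounded `B`.
-/

theorem Real.tsum_mul_le_sqrt_mul_sqrt {ι : Type*} {f g : ι → ℝ} (hf : ∀ i, 0 ≤ f i)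
    (hg : ∀ i, 0 ≤ g i) (hf_sum : Summable fun i => f i ^ 2)
    (hg_sum : Summable fun i => g i ^ 2) :
    (Summable fun i => f i * g i) ∧
      ∑' i, f i * g i ≤ √(∑' i, f i ^ 2) * √(∑' i, g i ^ 2) := by
  simp_rw [← Real.rpow_two] at hf_sum hg_sum
  simpa only [Real.rpow_two, ← Real.sqrt_eq_rpow] using
    Real.summable_and_inner_le_Lp_mul_Lq_tsum_of_nonneg Real.HolderConjugate.two_two hf hg
      hf_sum hg_sum

lemma pnorm_nonneg (m : ℕ) (ξ : ℕ → ℂ) : 0 ≤ pnorm m ξ := Real.sqrt_nonneg _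

lemma pnorm_sq {m : ℕ} {ξ : ℕ → ℂ} :
    pnorm m ξ ^ 2 = ∑' j : ℕ, ‖ξ j‖ ^ 2 * ((j : ℝ) + 1) ^ (2 * m) :=
  Real.sq_sqrt (tsum_nonneg fun _ => by positivity)

lemma pnorm_const_mul (m : ℕ) (c : ℂ) (ξ : ℕ → ℂ) :
    pnorm m (fun j => c * ξ j) = ‖c‖ * pnorm m ξ := by
  simp only [pnorm, norm_mul, mul_pow, mul_assoc, tsum_mul_left]
  rw [Real.sqrt_mul (by positivity), Real.sqrt_sq (norm_nonneg c)]

lemma pnorm_le_pnorm {m n : ℕ} (hmn : m ≤ n) {ξ : ℕ → ℂ}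
    (hξ : Summable fun j : ℕ => ‖ξ j‖ ^ 2 * ((j : ℝ) + 1) ^ (2 * n)) :
    pnorm m ξ ≤ pnorm n ξ := by
  have hweight (j : ℕ) : ‖ξ j‖ ^ 2 * ((j : ℝ) + 1) ^ (2 * m) ≤
      ‖ξ j‖ ^ 2 * ((j : ℝ) + 1) ^ (2 * n) := by
    gcongr
    exact le_add_of_nonneg_left j.cast_nonneg
  exact Real.sqrt_le_sqrt <| Summable.tsum_le_tsum hweight
    (hξ.of_nonneg_of_le (fun _ => by positivity) hweight) hξ

/-- Log-convexity of the scale of norms `|ξ|_n`. -/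
lemma pnorm_add_sq_le {m n : ℕ} {ξ : ℕ → ℂ}
    (hm : Summable fun j : ℕ => ‖ξ j‖ ^ 2 * ((j : ℝ) + 1) ^ (2 * (2 * m)))
    (hn : Summable fun j : ℕ => ‖ξ j‖ ^ 2 * ((j : ℝ) + 1) ^ (2 * (2 * n))) :
    pnorm (m + n) ξ ^ 2 ≤ pnorm (2 * m) ξ * pnorm (2 * n) ξ := by
  set f : ℕ → ℝ := fun j => ‖ξ j‖ * ((j : ℝ) + 1) ^ (2 * m)
  set g : ℕ → ℝ := fun j => ‖ξ j‖ * ((j : ℝ) + 1) ^ (2 * n)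
  have hf_sq (j : ℕ) : f j ^ 2 = ‖ξ j‖ ^ 2 * ((j : ℝ) + 1) ^ (2 * (2 * m)) := by ring
  have hg_sq (j : ℕ) : g j ^ 2 = ‖ξ j‖ ^ 2 * ((j : ℝ) + 1) ^ (2 * (2 * n)) := by ring
  have hfg (j : ℕ) : ‖ξ j‖ ^ 2 * ((j : ℝ) + 1) ^ (2 * (m + n)) = f j * g j := by ring
  have hcs := Real.tsum_mul_le_sqrt_mul_sqrt (f := f) (g := g) (fun _ => by positivity)
    (fun _ => by positivity) (by simpa only [hf_sq] using hm) (by simpa only [hg_sq] using hn)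
  simp only [hf_sq, hg_sq] at hcs
  rw [pnorm_sq, tsum_congr hfg]
  exact hcs.2

lemma norm_pairing_le (m : ℕ) {ζ ξ : ℕ → ℂ}
    (hζ : Summable fun j : ℕ => ‖ζ j‖ ^ 2 / ((j : ℝ) + 1) ^ (2 * m))
    (hξ : Summable fun j : ℕ => ‖ξ j‖ ^ 2 * ((j : ℝ) + 1) ^ (2 * m)) :
    ‖pairing ζ ξ‖ ≤ mnorm m ζ * pnorm m ξ := by
  set f : ℕ → ℝ := fun j => ‖ζ j‖ / ((j : ℝ) + 1) ^ m
  set g : ℕ → ℝ := fun j => ‖ξ j‖ * ((j : ℝ) + 1) ^ m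
  have hf_sq (j : ℕ) : f j ^ 2 = ‖ζ j‖ ^ 2 / ((j : ℝ) + 1) ^ (2 * m) := by ring
  have hg_sq (j : ℕ) : g j ^ 2 = ‖ξ j‖ ^ 2 * ((j : ℝ) + 1) ^ (2 * m) := by ring
  have hfg (j : ℕ) : ‖ζ j * starRingEnd ℂ (ξ j)‖ = f j * g j := by
    simp only [f, g, norm_mul, RCLike.norm_conj]
    field_simp
  obtain ⟨hsum, hcs⟩ := Real.tsum_mul_le_sqrt_mul_sqrt (f := f) (g := g)
    (fun _ => by positivity) (fun _ => by positivity)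
    (by simpa only [hf_sq] using hζ) (by simpa only [hg_sq] using hξ)
  calc ‖pairing ζ ξ‖ ≤ ∑' j, ‖ζ j * starRingEnd ℂ (ξ j)‖ :=
        norm_tsum_le_tsum_norm (by simpa only [hfg] using hsum)
    _ ≤ mnorm m ζ * pnorm m ξ := by
        simp only [hf_sq, hg_sq] at hcs
        rw [tsum_congr hfg]
        exact hcs

lemma exists_mnorm_le_one_pairing_eq (m : ℕ) {ξ : ℕ → ℂ}
    (hξ : Summable fun j : ℕ => ‖ξ j‖ ^ 2 * ((j : ℝ) + 1) ^ (2 * m)) (hp : pnorm m ξ ≠ 0) :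
    ∃ ζ : ℕ → ℂ, (Summable fun j : ℕ => ‖ζ j‖ ^ 2 / ((j : ℝ) + 1) ^ (2 * m)) ∧
      mnorm m ζ ≤ 1 ∧ pairing ζ ξ = pnorm m ξ := by
  set p := pnorm m ξ
  set ζ : ℕ → ℂ := fun j => ((((j : ℝ) + 1) ^ (2 * m) / p : ℝ) : ℂ) * ξ j
  have hζ_sq (j : ℕ) : ‖ζ j‖ ^ 2 / ((j : ℝ) + 1) ^ (2 * m) =
      ‖ξ j‖ ^ 2 * ((j : ℝ) + 1) ^ (2 * m) / p ^ 2 := by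
    simp only [ζ, norm_mul, Complex.norm_real, Real.norm_eq_abs, mul_pow, sq_abs]
    field_simp
  have hζξ (j : ℕ) : ζ j * starRingEnd ℂ (ξ j) =
      ((‖ξ j‖ ^ 2 * ((j : ℝ) + 1) ^ (2 * m) / p : ℝ) : ℂ) := by
    simp only [ζ, mul_assoc, Complex.mul_conj']
    push_cast
    ring
  refine ⟨ζ, by simpa only [hζ_sq] using hξ.div_const (p ^ 2), ?_, ?_⟩
  · rw [mnorm, tsum_congr hζ_sq, tsum_div_const, ← pnorm_sq, div_self (pow_ne_zero 2 hp),
      Real.sqrt_one]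
  · rw [pairing, tsum_congr hζξ, ← Complex.ofReal_tsum, tsum_div_const, ← pnorm_sq, sq,
      mul_div_cancel_right₀ _ hp]

lemma pnorm_rankOne (m : ℕ) (ξ ζ : ℕ → ℂ) :
    pnorm m (rankOne ξ ζ) = (pnorm 0 ξ)⁻¹ * ‖pairing ζ ξ‖ * pnorm m ξ := by
  unfold rankOne
  rw [pnorm_const_mul, norm_mul, norm_inv, Complex.norm_real, Real.norm_eq_abs,
    abs_of_nonneg (pnorm_nonneg 0 ξ)]

lemma pnorm_rankOne_le {m : ℕ} {ξ ζ : ℕ → ℂ}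
    (hξ : Summable fun j : ℕ => ‖ξ j‖ ^ 2 * ((j : ℝ) + 1) ^ (2 * m))
    (hζ : Summable fun j : ℕ => ‖ζ j‖ ^ 2 / ((j : ℝ) + 1) ^ (2 * m)) (hζ_le : mnorm m ζ ≤ 1) :
    pnorm m (rankOne ξ ζ) ≤ (pnorm 0 ξ)⁻¹ * pnorm m ξ ^ 2 := by
  have hpair : ‖pairing ζ ξ‖ ≤ pnorm m ξ :=
    (norm_pairing_le m hζ hξ).trans
      (mul_le_of_le_one_left (pnorm_nonneg m ξ) hζ_le)
  rw [pnorm_rankOne, sq, ← mul_assoc]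
  gcongr
  · exact pnorm_nonneg m ξ
  · exact inv_nonneg.2 (pnorm_nonneg 0 ξ)

lemma inv_pnorm_zero_mul_sq_le {ξ : ℕ → ℂ} (hξ : InS ξ) (m : ℕ) :
    (pnorm 0 ξ)⁻¹ * pnorm m ξ ^ 2 ≤ pnorm (2 * m) ξ := by
  rcases (pnorm_nonneg 0 ξ).eq_or_lt with h0 | h0
  · rw [← h0, inv_zero, zero_mul]
    exact pnorm_nonneg _ ξ
  rw [inv_mul_le_iff₀ h0]
  simpa using pnorm_add_sq_le (m := 0) (n := m) (hξ 0) (hξ (2 * m))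

/-- For `0 ≠ ξ ∈ s` the rank-one operator `x_ξ = ‖ξ‖₂⁻¹⟨·,ξ⟩ξ` satisfies
`‖x_ξ‖_m = ‖ξ‖₂⁻¹|ξ|_m² ≤ |ξ|_{2m}`; consequently `{x_ξ : ξ ∈ B, ξ ≠ 0}` is a bounded
subset of `L(s',s)` whenever `B` is a bounded subset of `s`. -/
theorem stmt19 :
    (∀ ξ : ℕ → ℂ, InS ξ → pnorm 0 ξ ≠ 0 → ∀ m : ℕ,
      sSup {r : ℝ | ∃ ζ : ℕ → ℂ,
          (Summable fun j : ℕ => ‖ζ j‖ ^ 2 / ((j : ℝ) + 1) ^ (2 * m)) ∧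
          mnorm m ζ ≤ 1 ∧ r = pnorm m (rankOne ξ ζ)} =
        (pnorm 0 ξ)⁻¹ * (pnorm m ξ) ^ 2 ∧
      (pnorm 0 ξ)⁻¹ * (pnorm m ξ) ^ 2 ≤ pnorm (2 * m) ξ) ∧
    (∀ B : Set (ℕ → ℂ), (∀ ξ ∈ B, InS ξ) →
      (∀ n : ℕ, ∃ C : ℝ, ∀ ξ ∈ B, pnorm n ξ ≤ C) →
      ∀ m : ℕ, ∃ C : ℝ, ∀ ξ ∈ B, pnorm 0 ξ ≠ 0 →
        ∀ ζ : ℕ → ℂ, (Summable fun j : ℕ => ‖ζ j‖ ^ 2 / ((j : ℝ) + 1) ^ (2 * m)) →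
          mnorm m ζ ≤ 1 → pnorm m (rankOne ξ ζ) ≤ C) := by
  refine ⟨fun ξ hξ h0 m => ⟨?_, inv_pnorm_zero_mul_sq_le hξ m⟩, ?_⟩
  · have hp : pnorm m ξ ≠ 0 :=
      (lt_of_lt_of_le ((pnorm_nonneg 0 ξ).lt_of_ne' h0) (pnorm_le_pnorm m.zero_le (hξ m))).ne'
    obtain ⟨ζ, hζ, hζ_le, hpair⟩ := exists_mnorm_le_one_pairing_eq m (hξ m) hp
    refine IsGreatest.csSup_eq ⟨⟨ζ, hζ, hζ_le, ?_⟩, ?_⟩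
    · rw [pnorm_rankOne, hpair, Complex.norm_real, Real.norm_eq_abs,
        abs_of_nonneg (pnorm_nonneg m ξ), mul_assoc, sq]
    · rintro r ⟨ζ', hζ', hζ'_le, rfl⟩
      exact pnorm_rankOne_le (hξ m) hζ' hζ'_le
  · intro B hB hbdd m
    obtain ⟨C, hC⟩ := hbdd (2 * m)
    exact ⟨C, fun ξ hξB _ ζ hζ hζ_le =>
      ((pnorm_rankOne_le (hB ξ hξB m) hζ hζ_le).trans
        (inv_pnorm_zero_mul_sq_le (hB ξ hξB) m)).trans (hC ξ hξB)⟩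
end
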